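/- Fix t > 0. The map μ ↦ E₂(μ,t) is differentiable on ℝ and its derivative at every μ equals the conditional variance Var₂(μ,t) = M₂(μ,t) − E₂(μ,t)²; in particular this derivative is nonnegative, so μ ↦ E₂(μ,t) is monotone nondecreasing. (Lemma 2 of the paper, case i = 2.) -/

import Mathlib

/-!
On an interval `[a, b]` the functions `x φ(x - μ)` and `x² φ(x - μ)` have explicit antiderivatives
in terms of `Φ(x - μ)` and `φ(x - μ)`. On `[-t, t]` this gives the closed forms `E₂ = μ + Z₂'/Z₂`
and `M₂ = μ² + 1 + ((μ - t) φ(-t - μ) - (μ + t) φ(t - μ))/Z₂`, where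
`Z₂' = φ(-t - μ) - φ(t - μ)` is the `μ`-derivative of `Z₂`; differentiating the first yields
`M₂ - E₂²`. This is nonnegative, being the normalized integral of `(x - E₂)² φ(x - μ)`.
-/

open MeasureTheory

/-- Standard Gaussian density `φ(x) = (2π)^{-1/2} exp(-x²/2)`. -/
noncomputable def gpdf (x : ℝ) : ℝ := (Real.sqrt (2 * Real.pi))⁻¹ * Real.exp (-x ^ 2 / 2)

/-- Standard Gaussian CDF `Φ(x)`. -/
noncomputable def gcdf (x : ℝ) : ℝ := ∫ t in Set.Iic x, gpdf t

/-- Normalizing constant `Z₂(μ,t) = Φ(t-μ) - Φ(-t-μ)`. -/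
noncomputable def Z2 (μ t : ℝ) : ℝ := gcdf (t - μ) - gcdf (-t - μ)

/-- Mean of `N(μ,1)` conditioned on the interval `[-t,t]`. -/
noncomputable def E2 (μ t : ℝ) : ℝ :=
  (Z2 μ t)⁻¹ * ∫ x in Set.Icc (-t) t, x * gpdf (x - μ)

/-- Second moment of `N(μ,1)` conditioned on the interval `[-t,t]`. -/
noncomputable def M2 (μ t : ℝ) : ℝ :=
  (Z2 μ t)⁻¹ * ∫ x in Set.Icc (-t) t, x ^ 2 * gpdf (x - μ)

open Set

theorem weighted_variance_nonneg {α : Type*} [MeasurableSpace α] {ν : Measure α} {X w : α → ℝ}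
    (hw : ∀ a, 0 ≤ w a) (h0 : Integrable w ν) (h1 : Integrable (fun a => X a * w a) ν)
    (h2 : Integrable (fun a => X a ^ 2 * w a) ν) :
    0 ≤ (∫ a, w a ∂ν)⁻¹ * ∫ a, X a ^ 2 * w a ∂ν -
      ((∫ a, w a ∂ν)⁻¹ * ∫ a, X a * w a ∂ν) ^ 2 := by
  set Z := ∫ a, w a ∂ν
  set c := Z⁻¹ * ∫ a, X a * w a ∂ν
  have hZ : 0 ≤ Z := integral_nonneg hw
  rcases hZ.eq_or_lt with hZ | hZ
  · simp [c, ← hZ]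
  have hexpand : ∫ a, (X a - c) ^ 2 * w a ∂ν =
      ∫ a, X a ^ 2 * w a ∂ν - 2 * c * ∫ a, X a * w a ∂ν + c ^ 2 * Z := by
    have hlin : Integrable (fun a => X a ^ 2 * w a - 2 * c * (X a * w a)) ν :=
      h2.sub (h1.const_mul _)
    have hpoint : (fun a => (X a - c) ^ 2 * w a) =
        fun a => X a ^ 2 * w a - 2 * c * (X a * w a) + c ^ 2 * w a := by
      funext a; ring
    rw [hpoint, integral_add hlin (h0.const_mul _), integral_sub h2 (h1.const_mul _),
      integral_const_mul, integral_const_mul]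
  have hvar : Z⁻¹ * ∫ a, X a ^ 2 * w a ∂ν - c ^ 2 = Z⁻¹ * ∫ a, (X a - c) ^ 2 * w a ∂ν := by
    rw [hexpand]
    simp only [c]
    field_simp
    ring
  rw [hvar]
  exact mul_nonneg (inv_nonneg.2 hZ.le) (integral_nonneg fun a => mul_nonneg (sq_nonneg _) (hw a))

theorem setIntegral_Icc_eq_sub_of_hasDerivAt {f F : ℝ → ℝ} {a b : ℝ} (hab : a ≤ b)
    (hF : ∀ x ∈ uIcc a b, HasDerivAt F (f x) x) (hf : IntervalIntegrable f volume a b) :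
    ∫ x in Icc a b, f x = F b - F a := by
  rw [integral_Icc_eq_integral_Ioc, ← intervalIntegral.integral_of_le hab]
  exact intervalIntegral.integral_eq_sub_of_hasDerivAt hF hf

theorem gpdf_pos (x : ℝ) : 0 < gpdf x := by
  unfold gpdf
  have : 0 < 2 * Real.pi := by positivity
  positivity

theorem continuous_gpdf : Continuous gpdf := by
  unfold gpdf
  fun_prop

theorem integrable_gpdf : Integrable gpdf := by
  have hform : gpdf = fun x => (Real.sqrt (2 * Real.pi))⁻¹ * Real.exp (-(1 / 2) * x ^ 2) := by
    funext x
    unfold gpdf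
    ring_nf
  rw [hform]
  exact (integrable_exp_neg_mul_sq (by norm_num)).const_mul _

theorem hasDerivAt_gpdf (x : ℝ) : HasDerivAt gpdf (-x * gpdf x) x := by
  have hexp : HasDerivAt (fun y : ℝ => -y ^ 2 / 2) (-x) x :=
    ((hasDerivAt_pow 2 x).neg.div_const 2).congr_deriv (by ring)
  exact (((Real.hasDerivAt_exp _).comp x hexp).const_mul _).congr_deriv (by unfold gpdf; ring)

theorem hasDerivAt_gcdf (x : ℝ) : HasDerivAt gcdf (gpdf x) x := by
  have hform : gcdf = fun y => gcdf 0 + ∫ s in (0 : ℝ)..y, gpdf s := by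
    funext y
    rw [← intervalIntegral.integral_Iic_sub_Iic integrable_gpdf.integrableOn
      integrable_gpdf.integrableOn]
    unfold gcdf
    ring
  rw [hform]
  exact (intervalIntegral.integral_hasDerivAt_right (continuous_gpdf.intervalIntegrable _ _)
    (continuous_gpdf.stronglyMeasurableAtFilter _ _) continuous_gpdf.continuousAt).const_add _

theorem gcdf_strictMono : StrictMono gcdf :=
  strictMono_of_hasDerivAt_pos hasDerivAt_gcdf gpdf_pos

section Shifted

variable (μ : ℝ)

theorem hasDerivAt_gcdf_sub (x : ℝ) : HasDerivAt (fun y => gcdf (y - μ)) (gpdf (x - μ)) x :=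
  (hasDerivAt_gcdf (x - μ)).comp_sub_const x μ

theorem hasDerivAt_gpdf_sub (x : ℝ) :
    HasDerivAt (fun y => gpdf (y - μ)) (-(x - μ) * gpdf (x - μ)) x :=
  (hasDerivAt_gpdf (x - μ)).comp_sub_const x μ

theorem hasDerivAt_gcdf_const_sub (c : ℝ) :
    HasDerivAt (fun m => gcdf (c - m)) (-gpdf (c - μ)) μ :=
  (hasDerivAt_gcdf (c - μ)).comp_const_sub c μ

theorem hasDerivAt_gpdf_const_sub (c : ℝ) :
    HasDerivAt (fun m => gpdf (c - m)) ((c - μ) * gpdf (c - μ)) μ :=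
  ((hasDerivAt_gpdf (c - μ)).comp_const_sub c μ).congr_deriv (by ring)

theorem continuous_gpdf_sub : Continuous fun x => gpdf (x - μ) :=
  continuous_gpdf.comp (continuous_sub_right μ)

variable {a b : ℝ}

theorem setIntegral_Icc_gpdf_sub (hab : a ≤ b) :
    ∫ x in Icc a b, gpdf (x - μ) = gcdf (b - μ) - gcdf (a - μ) :=
  setIntegral_Icc_eq_sub_of_hasDerivAt hab (fun x _ => hasDerivAt_gcdf_sub μ x)
    ((continuous_gpdf_sub μ).intervalIntegrable _ _)

theorem setIntegral_Icc_mul_gpdf_sub (hab : a ≤ b) :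
    ∫ x in Icc a b, x * gpdf (x - μ) =
      μ * (gcdf (b - μ) - gcdf (a - μ)) + (gpdf (a - μ) - gpdf (b - μ)) := by
  have hF (x : ℝ) : HasDerivAt (fun y => μ * gcdf (y - μ) - gpdf (y - μ)) (x * gpdf (x - μ)) x :=
    (((hasDerivAt_gcdf_sub μ x).const_mul μ).sub (hasDerivAt_gpdf_sub μ x)).congr_deriv (by ring)
  rw [setIntegral_Icc_eq_sub_of_hasDerivAt hab (fun x _ => hF x)
    ((continuous_id.mul (continuous_gpdf_sub μ)).intervalIntegrable _ _)]
  ring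

theorem setIntegral_Icc_sq_mul_gpdf_sub (hab : a ≤ b) :
    ∫ x in Icc a b, x ^ 2 * gpdf (x - μ) =
      (μ ^ 2 + 1) * (gcdf (b - μ) - gcdf (a - μ)) +
        ((μ + a) * gpdf (a - μ) - (μ + b) * gpdf (b - μ)) := by
  have hF (x : ℝ) : HasDerivAt (fun y => (μ ^ 2 + 1) * gcdf (y - μ) - (y + μ) * gpdf (y - μ))
      (x ^ 2 * gpdf (x - μ)) x :=
    (((hasDerivAt_gcdf_sub μ x).const_mul _).sub
      (((hasDerivAt_id' x).add_const μ).mul (hasDerivAt_gpdf_sub μ x))).congr_deriv (by ring)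
  rw [setIntegral_Icc_eq_sub_of_hasDerivAt hab (fun x _ => hF x)
    (((continuous_pow 2).mul (continuous_gpdf_sub μ)).intervalIntegrable _ _)]
  ring

end Shifted

section Interval

variable (μ : ℝ) {t : ℝ}

theorem Z2_pos (ht : 0 < t) : 0 < Z2 μ t :=
  sub_pos.2 (gcdf_strictMono (by linarith))

theorem hasDerivAt_Z2 : HasDerivAt (fun m => Z2 m t) (gpdf (-t - μ) - gpdf (t - μ)) μ :=
  ((hasDerivAt_gcdf_const_sub μ t).sub (hasDerivAt_gcdf_const_sub μ (-t))).congr_deriv (by ring)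

theorem E2_eq (ht : 0 < t) : E2 μ t = μ + (Z2 μ t)⁻¹ * (gpdf (-t - μ) - gpdf (t - μ)) := by
  have hZ := (Z2_pos μ ht).ne'
  rw [E2, setIntegral_Icc_mul_gpdf_sub μ (by linarith), ← Z2]
  field_simp

theorem M2_eq (ht : 0 < t) : M2 μ t =
    μ ^ 2 + 1 + (Z2 μ t)⁻¹ * ((μ - t) * gpdf (-t - μ) - (μ + t) * gpdf (t - μ)) := by
  have hZ := (Z2_pos μ ht).ne'
  rw [M2, setIntegral_Icc_sq_mul_gpdf_sub μ (by linarith), ← Z2]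
  field_simp
  ring

theorem hasDerivAt_E2 (ht : 0 < t) : HasDerivAt (fun m => E2 m t) (M2 μ t - E2 μ t ^ 2) μ := by
  have hZ := (Z2_pos μ ht).ne'
  have hboundary : HasDerivAt (fun m => gpdf (-t - m) - gpdf (t - m))
      ((-t - μ) * gpdf (-t - μ) - (t - μ) * gpdf (t - μ)) μ :=
    (hasDerivAt_gpdf_const_sub μ (-t)).sub (hasDerivAt_gpdf_const_sub μ t)
  have hclosed := (hasDerivAt_id μ).add (((hasDerivAt_Z2 μ).inv hZ).mul hboundary)
  rw [show (fun m => E2 m t) = _ from funext fun m => E2_eq m ht]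
  refine hclosed.congr_deriv ?_
  rw [M2_eq μ ht, E2_eq μ ht, Pi.inv_apply]
  field_simp
  ring

theorem M2_sub_E2_sq_nonneg (ht : 0 < t) : 0 ≤ M2 μ t - E2 μ t ^ 2 := by
  have hw := continuous_gpdf_sub μ
  have h := weighted_variance_nonneg (ν := volume.restrict (Icc (-t) t)) (X := id)
    (fun x => (gpdf_pos (x - μ)).le) hw.integrableOn_Icc
    (continuous_id.mul hw).integrableOn_Icc ((continuous_pow 2).mul hw).integrableOn_Icc
  rwa [setIntegral_Icc_gpdf_sub μ (by linarith), ← Z2] at h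

end Interval

/-- Lemma 2 of the paper (case i = 2): for fixed `t > 0`, the interval-truncated Gaussian
mean `μ ↦ E₂(μ,t)` is differentiable with derivative the conditional variance
`Var₂(μ,t) = M₂(μ,t) - E₂(μ,t)²`, which is nonnegative; hence `μ ↦ E₂(μ,t)` is
monotone nondecreasing. -/
theorem truncGaussInterval_mean_hasDerivAt_variance (t : ℝ) (ht : 0 < t) :
    (∀ μ : ℝ, HasDerivAt (fun m : ℝ => E2 m t) (M2 μ t - (E2 μ t) ^ 2) μ) ∧
    (∀ μ : ℝ, 0 ≤ M2 μ t - (E2 μ t) ^ 2) ∧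
    Monotone (fun μ : ℝ => E2 μ t) :=
  ⟨fun μ => hasDerivAt_E2 μ ht, fun μ => M2_sub_E2_sq_nonneg μ ht,
    monotone_of_deriv_nonneg (fun μ => (hasDerivAt_E2 μ ht).differentiableAt)
      fun μ => (hasDerivAt_E2 μ ht).deriv ▸ M2_sub_E2_sq_nonneg μ ht⟩
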